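/- arXiv:1401.4255 — 4 statements merged into one kernel-verified Lean document; each statement's English description precedes it below -/
import Mathlib

section
/- For all integers n ≥ k ≥ 1, the Bell polynomial of the second kind evaluated at x₁ = 0 and x₂ = ⋯ = x_{n-k+1} = 1 satisfies B_{n,k}(0,1,1,…,1) = ∑_{i=0}^{k} (-1)^i · C(n,i) · S(n-i, k-i), where S denotes the Stirling numbers of the second kind. -/
open Finset

/-- Bell polynomials of the second kind: `bellB n k x` is
`B_{n,k}(x 1, x 2, …, x (n-k+1))`, summing over sequences of nonnegative
integers `ℓ 1, …` with `∑ i * ℓ i = n` and `∑ ℓ i = k`. -/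
noncomputable def bellB (n k : ℕ) (x : ℕ → ℝ) : ℝ :=
  ∑ ℓ : Fin (n + 1) → Fin (n + 1),
    if (ℓ 0 : ℕ) = 0 ∧ (∑ i : Fin (n + 1), (i : ℕ) * (ℓ i : ℕ)) = n ∧ (∑ i : Fin (n + 1), (ℓ i : ℕ)) = k then
      (n.factorial : ℝ) / (∏ i : Fin (n + 1), ((ℓ i : ℕ).factorial : ℝ)) *
        ∏ i : Fin (n + 1), (x (i : ℕ) / ((i : ℕ).factorial : ℝ)) ^ (ℓ i : ℕ)
    else 0

/-- Stirling numbers of the second kind (real-valued), with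
`stirlingS 0 0 = 1` and `stirlingS n 0 = 0` for `n ≥ 1`. -/
noncomputable def stirlingS (n k : ℕ) : ℝ :=
  (1 / (k.factorial : ℝ)) *
    ∑ l ∈ Finset.range (k + 1), (-1 : ℝ) ^ (k - l) * (k.choose l) * (l : ℝ) ^ n

/-
By the multinomial theorem, `B_{n,k}(x) = n!/k! · [tⁿ] (∑_{i ≥ 1} xᵢ tⁱ/i!)ᵏ`.
For `x = (0, 1, 1, …)` the inner series is `eᵗ - 1 - t`; expanding `(-t + (eᵗ - 1))ᵏ`
binomially and using `[tᵐ] (eᵗ - 1)ʲ = j!/m! · S(m, j)` gives the alternating sum, because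
`n!/k! · C(k, i) · (k - i)!/(n - i)! = C(n, i)`.
-/

open PowerSeries
open scoped Nat

theorem PowerSeries.coe_trunc_succ_eq_sum_fin {R : Type*} [CommSemiring R] (f : R⟦X⟧)
    (n : ℕ) :
    (trunc (n + 1) f : R⟦X⟧) = ∑ i : Fin (n + 1), monomial i (coeff i f) := by
  rw [trunc_apply, Nat.Ico_zero_eq_range, ← Fin.sum_univ_eq_sum_range,
    ← Polynomial.coeToPowerSeries.ringHom_apply, map_sum]
  simp [Polynomial.coe_monomial]

theorem PowerSeries.coeff_pow_eq_sum_piAntidiag {R : Type*} [CommSemiring R] (f : R⟦X⟧)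
    (n k : ℕ) :
    coeff n (f ^ k) =
      ∑ ℓ ∈ piAntidiag (univ : Finset (Fin (n + 1))) k
          with ∑ i : Fin (n + 1), (i : ℕ) * ℓ i = n,
        (Nat.multinomial univ ℓ : R) * ∏ i : Fin (n + 1), coeff i f ^ ℓ i := by
  rw [← coeff_coe_trunc_of_lt n.lt_succ_self, ← trunc_trunc_pow,
    coeff_coe_trunc_of_lt n.lt_succ_self, coe_trunc_succ_eq_sum_fin, sum_pow_eq_sum_piAntidiag,
    map_sum, sum_filter]
  refine sum_congr rfl fun ℓ _ => ?_
  simp only [monomial_pow, prod_monomial, ← map_natCast (C (R := R)), coeff_C_mul, coeff_monomial]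
  simp_rw [mul_ite, mul_zero, mul_comm (ℓ _), eq_comm (a := n)]

theorem lt_succ_of_sum_mul_eq {n : ℕ} {g : Fin (n + 1) → ℕ} (h0 : g 0 = 0)
    (hw : ∑ i : Fin (n + 1), (i : ℕ) * g i = n) (i : Fin (n + 1)) : g i < n + 1 := by
  rcases eq_or_ne i 0 with rfl | hi
  · omega
  · have hle : (i : ℕ) * g i ≤ n := calc
      (i : ℕ) * g i ≤ ∑ j : Fin (n + 1), (j : ℕ) * g j :=
        single_le_sum (f := fun j : Fin (n + 1) => (j : ℕ) * g j)
          (fun _ _ => Nat.zero_le _) (mem_univ i)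
      _ = n := hw
    have hpos : 0 < (i : ℕ) := Fin.pos_iff_ne_zero.mpr hi
    nlinarith

theorem bellB_eq_factorial_div_mul_coeff_pow (n k : ℕ) (x : ℕ → ℝ) :
    bellB n k x = n ! / k ! * coeff n ((mk fun i => if i = 0 then 0 else x i / i !) ^ k) := by
  symm
  rw [coeff_pow_eq_sum_piAntidiag, mul_sum,
    ← sum_filter_of_ne (p := fun g => g 0 = 0), filter_filter, bellB, ← sum_filter]
  swap
  -- the series has no constant term, so multiplicity vectors with `g 0 ≠ 0` contribute nothing
  · intro g _ hg
    by_contra h0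
    refine hg ?_
    rw [prod_eq_zero (i := 0) (mem_univ _) (by simp [h0]), mul_zero, mul_zero]
  refine sum_bij'
    (fun g hg i =>
      ⟨g i, lt_succ_of_sum_mul_eq (mem_filter.1 hg).2.2 (mem_filter.1 hg).2.1 i⟩)
    (fun ℓ _ i => ℓ i) ?_ ?_ (fun _ _ => rfl) (fun _ _ => rfl) ?_
  · intro g hg
    obtain ⟨⟨hsum, -⟩, hw, h0⟩ := by simpa only [mem_filter, mem_piAntidiag] using hg
    simp [hsum, hw, h0]
  · intro ℓ hℓ
    simp only [mem_filter, mem_univ, true_and] at hℓ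
    simp [mem_piAntidiag, hℓ]
  · intro g hg
    obtain ⟨⟨hsum, -⟩, -, h0⟩ := by simpa only [mem_filter, mem_piAntidiag] using hg
    have hcoeff (i : Fin (n + 1)) :
        coeff i (mk fun i => if i = 0 then 0 else x i / i !) ^ g i = (x i / (i : ℕ) !) ^ g i := by
      rcases eq_or_ne i 0 with rfl | hi
      · simp [h0]
      · simp [hi]
    have hmult : (Nat.multinomial univ g : ℝ) = k ! / ∏ i, ((g i) ! : ℝ) := by
      rw [eq_div_iff (by positivity), mul_comm, ← hsum]
      exact_mod_cast Nat.multinomial_spec univ g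
    simp only [hcoeff, hmult]
    field_simp

theorem coeff_exp_sub_one_pow (j m : ℕ) :
    coeff m ((exp ℝ - 1) ^ j) = j ! / m ! * stirlingS m j := by
  rw [sub_eq_add_neg, add_pow, map_sum, stirlingS, mul_sum, mul_sum]
  refine sum_congr rfl fun l _ => ?_
  have hterm : exp ℝ ^ l * (-1) ^ (j - l) * (j.choose l : ℝ⟦X⟧) =
      C ((-1 : ℝ) ^ (j - l) * j.choose l) * rescale (l : ℝ) (exp ℝ) := by
    rw [← exp_pow_eq_rescale_exp, map_mul, map_pow, map_neg, map_one, map_natCast]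
    ring
  rw [hterm, coeff_C_mul, coeff_rescale, coeff_exp]
  push_cast
  field_simp

theorem coeff_X_pow_mul_exp_sub_one_pow (i j m : ℕ) :
    coeff m (X ^ i * (exp ℝ - 1) ^ j) =
      if i ≤ m then j ! / (m - i)! * stirlingS (m - i) j else 0 := by
  rw [coeff_X_pow_mul', coeff_exp_sub_one_pow]

theorem factorial_div_mul_choose_mul_factorial_div {n k i : ℕ} (hik : i ≤ k) (hin : i ≤ n) :
    (n ! / k ! : ℝ) * (k.choose i * ((k - i)! / (n - i)!)) = n.choose i := by
  rw [Nat.cast_choose ℝ hik, Nat.cast_choose ℝ hin]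
  field_simp

theorem mk_eq_exp_sub_one_sub_X :
    (mk fun i => if i = 0 then 0 else (if i = 1 then 0 else 1) / (i ! : ℝ)) =
      exp ℝ - 1 - X := by
  ext i
  rcases i with _ | _ | i <;> simp [coeff_X]

theorem stmt_0_general (n k : ℕ) :
    bellB n k (fun i => if i = 1 then 0 else 1) =
      ∑ i ∈ Finset.range (k + 1),
        (-1 : ℝ) ^ i * (n.choose i) * stirlingS (n - i) (k - i) := by
  rw [bellB_eq_factorial_div_mul_coeff_pow, mk_eq_exp_sub_one_sub_X,
    sub_eq_neg_add (exp ℝ - 1), add_pow, map_sum, mul_sum]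
  refine sum_congr rfl fun i hi => ?_
  have hik : i ≤ k := Nat.lt_succ_iff.mp (mem_range.mp hi)
  have hterm : (-X : ℝ⟦X⟧) ^ i * (exp ℝ - 1) ^ (k - i) * (k.choose i : ℝ⟦X⟧) =
      C ((-1 : ℝ) ^ i * k.choose i) * (X ^ i * (exp ℝ - 1) ^ (k - i)) := by
    rw [map_mul, map_pow, map_neg, map_one, map_natCast]
    ring
  rw [hterm, coeff_C_mul, coeff_X_pow_mul_exp_sub_one_pow]
  split_ifs with hin
  · rw [← factorial_div_mul_choose_mul_factorial_div hik hin]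
    ring
  · simp [Nat.choose_eq_zero_of_lt (not_le.mp hin)]

theorem stmt_0 (n k : ℕ) (hk : 1 ≤ k) (hkn : k ≤ n) :
    bellB n k (fun i => if i = 1 then 0 else 1) =
      ∑ i ∈ Finset.range (k + 1),
        (-1 : ℝ) ^ i * (n.choose i) * stirlingS (n - i) (k - i) :=
  stmt_0_general n k
end

section
/- For every positive integer n, the n-th Bernoulli number satisfies Bₙ = ∑_{k=1}^{n} (-1)^k · k! · B_{n,k}(1/2, 1/3, …, 1/(n-k+2)), where B_{n,k} denotes the Bell polynomial of the second kind. -/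
open Finset

/-! Let `G = (eˣ - 1)/x - 1 = ∑_{i ≥ 1} xⁱ/(i+1)!`, so that `x/(eˣ - 1) = 1/(1 + G)`. Since `G` has
no constant term, the coefficient of `xⁿ` in the geometric series `∑ₖ (-G)ᵏ` only involves
`k ≤ n`. By the multinomial theorem, `n! [xⁿ] Gᵏ = k! B_{n,k}(g₁, g₂, …)` with
`gᵢ = i! [xⁱ] G = 1/(i+1)`. -/

open PowerSeries
open scoped Nat

section PowerSeries

variable {R : Type*} [CommRing R]

lemma coeff_pow_eq_of_X_pow_dvd_sub {f g : R⟦X⟧} {n : ℕ} (h : X ^ (n + 1) ∣ f - g) (k : ℕ) :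
    coeff n (f ^ k) = coeff n (g ^ k) := by
  have := X_pow_dvd_iff.mp (h.trans (sub_dvd_pow_sub_pow f g k)) n n.lt_succ_self
  rwa [map_sub, sub_eq_zero] at this

lemma X_pow_succ_dvd_sub_sum_C_coeff_mul_X_pow (f : R⟦X⟧) (n : ℕ) :
    X ^ (n + 1) ∣ f - ∑ i : Fin (n + 1), C (coeff i f) * X ^ (i : ℕ) := by
  refine X_pow_dvd_iff.mpr fun m hm => ?_
  simp [coeff_X_pow, Fin.sum_univ_eq_sum_range (fun i => if m = i then coeff i f else 0), hm]

lemma coeff_sum_C_mul_X_pow_pow {ι : Type*} [DecidableEq ι] (s : Finset ι) (a : ι → R)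
    (d : ι → ℕ) (n k : ℕ) :
    coeff n ((∑ i ∈ s, C (a i) * X ^ d i) ^ k) =
      ∑ ℓ ∈ s.piAntidiag k,
        if ∑ i ∈ s, d i * ℓ i = n then (Nat.multinomial s ℓ : R) * ∏ i ∈ s, a i ^ ℓ i else 0 := by
  rw [sum_pow_eq_sum_piAntidiag, map_sum]
  refine sum_congr rfl fun ℓ _ => ?_
  have hprod : ∏ i ∈ s, (C (a i) * X ^ d i) ^ ℓ i =
      C (∏ i ∈ s, a i ^ ℓ i) * X ^ ∑ i ∈ s, d i * ℓ i := by
    simp only [mul_pow, ← pow_mul, prod_mul_distrib, map_prod, map_pow, prod_pow_eq_pow_sum]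
  rw [hprod, ← map_natCast (C (R := R)), ← mul_assoc, ← map_mul, coeff_C_mul_X_pow]
  exact if_congr eq_comm rfl rfl

lemma coeff_eq_sum_neg_one_pow_mul_coeff_pow {A G : R⟦X⟧} (hG : constantCoeff G = 0)
    (h : A * (1 + G) = 1) (n : ℕ) :
    coeff n A = ∑ k ∈ range (n + 1), (-1) ^ k * coeff n (G ^ k) := by
  have hgeom := mul_neg_geom_sum (-G) (n + 1)
  have hrem : A - ∑ k ∈ range (n + 1), (-G) ^ k = A * (-G) ^ (n + 1) := by
    linear_combination (∑ k ∈ range (n + 1), (-G) ^ k) * h - A * hgeom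
  have hX : X ^ (n + 1) ∣ A * (-G) ^ (n + 1) :=
    (pow_dvd_pow_of_dvd (dvd_neg.mpr (X_dvd_iff.mpr hG)) _).mul_left A
  have := X_pow_dvd_iff.mp (hrem ▸ hX) n n.lt_succ_self
  rw [map_sub, sub_eq_zero, map_sum] at this
  rw [this]
  refine sum_congr rfl fun k _ => ?_
  rw [neg_pow, ← map_one C, ← map_neg C, ← map_pow, coeff_C_mul]

end PowerSeries

lemma Nat.cast_multinomial {K ι : Type*} [Field K] [CharZero K] (s : Finset ι) (ℓ : ι → ℕ) :
    (Nat.multinomial s ℓ : K) = (∑ i ∈ s, ℓ i)! / ∏ i ∈ s, ((ℓ i)! : K) := by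
  rw [eq_div_iff (prod_ne_zero_iff.mpr fun i _ => Nat.cast_ne_zero.mpr (Nat.factorial_ne_zero _)),
    mul_comm]
  exact_mod_cast Nat.multinomial_spec s ℓ

lemma bellB_eq_sum_piAntidiag (n k : ℕ) (x : ℕ → ℝ) :
    bellB n k x = ∑ ℓ ∈ univ.piAntidiag k,
      if ℓ 0 = 0 ∧ ∑ i : Fin (n + 1), (i : ℕ) * ℓ i = n then
        (n ! : ℝ) / (∏ i, ((ℓ i)! : ℝ)) * ∏ i : Fin (n + 1), (x i / (i : ℕ)!) ^ ℓ i
      else 0 := by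
  refine sum_bij_ne_zero (fun ℓ _ _ i => (ℓ i : ℕ)) ?_ ?_ ?_ ?_
  · intro ℓ _ hℓ
    simpa using (ite_ne_right_iff.mp hℓ).1.2.2
  · intro ℓ₁ _ _ ℓ₂ _ _ h
    exact funext fun i => Fin.ext (congrFun h i)
  · intro ℓ hℓ hne
    obtain ⟨h₀, hn⟩ := (ite_ne_right_iff.mp hne).1
    have hle : ∀ i, ℓ i < n + 1 := by
      intro i
      rcases eq_or_ne i 0 with rfl | hi
      · omega
      · have := single_le_sum (f := fun i : Fin (n + 1) => (i : ℕ) * ℓ i)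
          (fun _ _ => Nat.zero_le _) (mem_univ i)
        have : 1 ≤ (i : ℕ) := Nat.one_le_iff_ne_zero.mpr (Fin.val_ne_zero_iff.mpr hi)
        nlinarith
    refine ⟨fun i => ⟨ℓ i, hle i⟩, mem_univ _, ?_, rfl⟩
    have hk : ∑ i, ℓ i = k := (mem_piAntidiag.mp hℓ).1
    simp_all
  · intro ℓ _ hℓ
    obtain ⟨h₀, hn, -⟩ := (ite_ne_right_iff.mp hℓ).1
    simp_all

theorem factorial_mul_coeff_pow_eq_bellB {f : ℝ⟦X⟧} {x : ℕ → ℝ} (hf₀ : constantCoeff f = 0)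
    (hf : ∀ i ≠ 0, coeff i f = x i / i !) (n k : ℕ) :
    (n ! : ℝ) * coeff n (f ^ k) = k ! * bellB n k x := by
  rw [coeff_pow_eq_of_X_pow_dvd_sub (X_pow_succ_dvd_sub_sum_C_coeff_mul_X_pow f n),
    coeff_sum_C_mul_X_pow_pow, bellB_eq_sum_piAntidiag, mul_sum, mul_sum]
  refine sum_congr rfl fun ℓ hℓ => ?_
  by_cases hℓ₀ : ℓ 0 = 0
  · have hprod : ∏ i : Fin (n + 1), coeff i f ^ ℓ i =
        ∏ i : Fin (n + 1), (x i / (i : ℕ)!) ^ ℓ i := by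
      refine prod_congr rfl fun i _ => ?_
      rcases eq_or_ne i 0 with rfl | hi
      · simp [hℓ₀]
      · rw [hf i (Fin.val_ne_zero_iff.mpr hi)]
    rw [Nat.cast_multinomial, (mem_piAntidiag.mp hℓ).1, hprod]
    simp only [hℓ₀, true_and]
    split_ifs <;> ring
  · have hzero : ∏ i : Fin (n + 1), coeff i f ^ ℓ i = 0 :=
      prod_eq_zero (mem_univ 0) (by simp [hf₀, hℓ₀])
    simp [hzero, hℓ₀]

lemma bernoulliPowerSeries_mul_mk_one_div_factorial_succ {A : Type*} [CommRing A] [Algebra ℚ A] :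
    bernoulliPowerSeries A * PowerSeries.mk (fun i => algebraMap ℚ A (1 / (i + 1)!)) = 1 := by
  have hX : X * PowerSeries.mk (fun i => algebraMap ℚ A (1 / (i + 1)!)) = exp A - 1 := by
    ext (_ | m) <;> simp [coeff_exp, coeff_succ_X_mul, coeff_one]
  apply X_mul_cancel
  rw [mul_one, mul_left_comm, hX, bernoulliPowerSeries_mul_exp_sub_one]

theorem stmt_3 (n : ℕ) (hn : 1 ≤ n) :
    (bernoulli n : ℝ) =
      ∑ k ∈ Finset.Icc 1 n,
        (-1 : ℝ) ^ k * (k.factorial : ℝ) * bellB n k (fun i => 1 / ((i : ℝ) + 1)) := by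
  set G : ℝ⟦X⟧ := PowerSeries.mk (fun i => algebraMap ℚ ℝ (1 / (i + 1)!)) - 1
  have hG₀ : constantCoeff G = 0 := by simp [G]
  have hG : ∀ i ≠ 0, coeff i G = 1 / ((i : ℝ) + 1) / i ! := by
    intro i hi
    rw [map_sub, coeff_mk, coeff_one, if_neg hi, sub_zero, Nat.factorial_succ]
    push_cast
    field_simp
  have hinv : bernoulliPowerSeries ℝ * (1 + G) = 1 := by
    simpa [G] using bernoulliPowerSeries_mul_mk_one_div_factorial_succ (A := ℝ)
  have hB : (bernoulli n : ℝ) = n ! * coeff n (bernoulliPowerSeries ℝ) := by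
    rw [bernoulliPowerSeries, coeff_mk, map_div₀, eq_ratCast, map_natCast]
    field_simp
  rw [hB, coeff_eq_sum_neg_one_pow_mul_coeff_pow hG₀ hinv, mul_sum, range_eq_Ico,
    sum_eq_sum_Ico_succ_bot (by omega : 0 < n + 1), zero_add, Ico_add_one_right_eq_Icc]
  simp only [pow_zero, coeff_one, if_neg (by omega : n ≠ 0), mul_zero, zero_add]
  refine sum_congr rfl fun k _ => ?_
  rw [mul_left_comm, factorial_mul_coeff_pow_eq_bellB hG₀ hG, mul_assoc]
end

section
/- For all integers n ≥ k ≥ 1 and any sequence x₂, x₃, …, x_{n+1}, the Bell polynomials of the second kind satisfy B_{n,k}(x₂/2, x₃/3, …, x_{n-k+2}/(n-k+2)) = (n!/(n+k)!) · B_{n+k,k}(0, x₂, x₃, …, x_{n+1}). -/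
/-
Write `ℓ i` for the number of parts of size `i`, so that the terms of `B_{n,k}` are indexed by the
partitions of `n` into `k` parts. Adding one to every part is a bijection onto the partitions of
`n + k` into `k` parts with no part equal to `1`, and these index exactly the terms of
`B_{n+k,k}(0, x₂, x₃, …)` that do not vanish. The shift leaves the multiplicities unchanged, so the
multinomial factor only changes from `n!` to `(n + k)!`, while
`x_{i+1} / (i+1)! = (x_{i+1} / (i+1)) / i!` matches the monomials.
-/

open Finset

def bellIndex (n k : ℕ) : Finset (Fin (n + 1) → Fin (n + 1)) :=
  {ℓ | (ℓ 0 : ℕ) = 0 ∧ (∑ i : Fin (n + 1), (i : ℕ) * (ℓ i : ℕ)) = n ∧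
    (∑ i : Fin (n + 1), (ℓ i : ℕ)) = k}

noncomputable def bellMonomial {n : ℕ} (x : ℕ → ℝ) (ℓ : Fin (n + 1) → Fin (n + 1)) : ℝ :=
  (n.factorial : ℝ) / (∏ i : Fin (n + 1), ((ℓ i : ℕ).factorial : ℝ)) *
    ∏ i : Fin (n + 1), (x (i : ℕ) / ((i : ℕ).factorial : ℝ)) ^ (ℓ i : ℕ)

theorem bellB_eq_sum_bellIndex (n k : ℕ) (x : ℕ → ℝ) :
    bellB n k x = ∑ ℓ ∈ bellIndex n k, bellMonomial x ℓ := by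
  rw [bellB, bellIndex, sum_filter]
  rfl

theorem bellB_congr {n k : ℕ} {x y : ℕ → ℝ} (h : ∀ i, 1 ≤ i → x i = y i) :
    bellB n k x = bellB n k y := by
  simp only [bellB_eq_sum_bellIndex]
  refine sum_congr rfl fun ℓ hℓ => ?_
  have hℓ0 : (ℓ 0 : ℕ) = 0 := (mem_filter.1 hℓ).2.1
  unfold bellMonomial
  congr 1
  refine prod_congr rfl fun i _ => ?_
  rcases Nat.eq_zero_or_pos (i : ℕ) with hi | hi
  · obtain rfl : i = 0 := Fin.ext hi
    rw [hℓ0, pow_zero, pow_zero]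
  · rw [h i hi]

section Shift

variable {n m : ℕ}

/-- If `ℓ i` counts the parts of size `i` of a partition, `shiftParts m ℓ` does the same for the
partition obtained by adding one to every part. -/
def shiftParts (m : ℕ) (ℓ : Fin (n + 1) → Fin (n + 1)) (j : Fin (m + 1)) : Fin (m + 1) :=
  if h : 1 ≤ (j : ℕ) ∧ (j : ℕ) ≤ n + 1 then Fin.ofNat (m + 1) (ℓ ⟨j - 1, by omega⟩) else 0

/-- `Fin.ofNat` reduces modulo `n + 1`, which is harmless on the multiplicity vectors of interest,
whose entries are at most `n`. -/
def unshiftParts (h : n < m) (ℓ' : Fin (m + 1) → Fin (m + 1)) (i : Fin (n + 1)) :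
    Fin (n + 1) :=
  Fin.ofNat (n + 1) (ℓ' ((Fin.castLE h i).succ))

theorem val_shiftParts_castLE_succ (h : n < m) (ℓ : Fin (n + 1) → Fin (n + 1))
    (i : Fin (n + 1)) : (shiftParts m ℓ ((Fin.castLE h i).succ) : ℕ) = ℓ i := by
  have := (ℓ i).isLt
  simp [shiftParts, Fin.is_le i, Nat.mod_eq_of_lt, show (ℓ i : ℕ) < m + 1 by omega]

theorem shiftParts_eq_zero (h : n < m) (ℓ : Fin (n + 1) → Fin (n + 1)) {j : Fin (m + 1)}
    (hj : j ∉ Set.range fun i : Fin (n + 1) => (Fin.castLE h i).succ) : shiftParts m ℓ j = 0 := by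
  refine dif_neg fun hj' => hj ⟨⟨j - 1, by omega⟩, Fin.ext ?_⟩
  simp only [Fin.val_castLE, Fin.val_succ]
  omega

@[to_additive]
theorem prod_shiftParts {M : Type*} [CommMonoid M] (h : n < m)
    (ℓ : Fin (n + 1) → Fin (n + 1)) (F : ℕ → ℕ → M) (hF : ∀ j, F j 0 = 1) :
    ∏ j : Fin (m + 1), F j (shiftParts m ℓ j) = ∏ i : Fin (n + 1), F (i + 1) (ℓ i) := by
  symm
  refine Fintype.prod_of_injective (fun i => (Fin.castLE h i).succ)
    ((Fin.succ_injective _).comp (Fin.castLE_injective h)) _ _ (fun j hj => ?_) fun i => ?_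
  · rw [shiftParts_eq_zero h ℓ hj, Fin.val_zero, hF]
  · rw [val_shiftParts_castLE_succ, Fin.val_succ, Fin.val_castLE]

theorem unshiftParts_shiftParts (h : n < m) (ℓ : Fin (n + 1) → Fin (n + 1)) :
    unshiftParts h (shiftParts m ℓ) = ℓ := by
  funext i
  simp [unshiftParts, val_shiftParts_castLE_succ]

theorem shiftParts_unshiftParts (h : n < m) (ℓ' : Fin (m + 1) → Fin (m + 1))
    (h0 : (ℓ' 0 : ℕ) = 0) (htail : ∀ j : Fin (m + 1), n + 1 < j → (ℓ' j : ℕ) = 0)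
    (hle : ∀ j, (ℓ' j : ℕ) ≤ n) : shiftParts m (unshiftParts h ℓ') = ℓ' := by
  funext j
  unfold shiftParts
  split_ifs with hj
  · have hj' : (Fin.castLE h ⟨j - 1, by omega⟩).succ = j := Fin.ext (by simp; omega)
    ext
    simp only [unshiftParts, hj', Fin.val_ofNat]
    rw [Nat.mod_eq_of_lt (Nat.lt_succ_of_le (hle j)), Nat.mod_eq_of_lt (ℓ' j).isLt]
  · ext
    rcases Nat.eq_zero_or_pos (j : ℕ) with hj0 | hj0
    · obtain rfl : j = 0 := Fin.ext hj0
      rw [h0, Fin.val_zero]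
    · rw [htail j (by omega), Fin.val_zero]

end Shift

theorem mem_bellIndex_iff_shiftParts {n k : ℕ} (hk : 1 ≤ k) (ℓ : Fin (n + 1) → Fin (n + 1)) :
    ℓ ∈ bellIndex n k ↔
      shiftParts (n + k) ℓ ∈ bellIndex (n + k) k ∧ (shiftParts (n + k) ℓ 1 : ℕ) = 0 := by
  have h : n < n + k := by omega
  have hweight := sum_shiftParts h ℓ (fun j v => j * v) fun _ => rfl
  have hcard := sum_shiftParts h ℓ (fun _ v => v) fun _ => rfl
  have hone : (shiftParts (n + k) ℓ 1 : ℕ) = ℓ 0 := by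
    have h1 : (Fin.castLE h (0 : Fin (n + 1))).succ = 1 :=
      Fin.ext (by simp [Nat.mod_eq_of_lt (show 1 < n + k + 1 by omega)])
    rw [← h1, val_shiftParts_castLE_succ]
  have hzero : (shiftParts (n + k) ℓ 0 : ℕ) = 0 := by simp [shiftParts]
  simp only [bellIndex, mem_filter, mem_univ, true_and] at hweight hcard ⊢
  simp only [add_mul, one_mul, sum_add_distrib] at hweight
  omega

theorem sub_one_mul_le_of_mem_bellIndex {m k : ℕ} {ℓ : Fin (m + 1) → Fin (m + 1)}
    (hℓ : ℓ ∈ bellIndex m k) (j : Fin (m + 1)) : ((j : ℕ) - 1) * ℓ j ≤ m - k := by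
  simp only [bellIndex, mem_filter, mem_univ, true_and] at hℓ
  obtain ⟨h0, hweight, hcard⟩ := hℓ
  have hsplit : ∀ i : Fin (m + 1), (i : ℕ) * ℓ i = ((i : ℕ) - 1) * ℓ i + ℓ i := by
    intro i
    rcases Nat.eq_zero_or_pos (i : ℕ) with hi | hi
    · obtain rfl : i = 0 := Fin.ext hi
      simp [h0]
    · rw [← Nat.succ_mul, Nat.succ_eq_add_one, Nat.sub_add_cancel hi]
  rw [sum_congr rfl fun i _ => hsplit i, sum_add_distrib, hcard] at hweight
  have := single_le_sum (f := fun i : Fin (m + 1) => ((i : ℕ) - 1) * ℓ i)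
    (fun _ _ => Nat.zero_le _) (mem_univ j)
  omega

theorem le_of_mem_bellIndex {m k : ℕ} {ℓ : Fin (m + 1) → Fin (m + 1)}
    (hℓ : ℓ ∈ bellIndex m k) (j : Fin (m + 1)) : (ℓ j : ℕ) ≤ k := by
  simp only [bellIndex, mem_filter, mem_univ, true_and] at hℓ
  rw [← hℓ.2.2]
  exact single_le_sum (f := fun i : Fin (m + 1) => (ℓ i : ℕ)) (fun _ _ => Nat.zero_le _) (mem_univ j)

theorem sum_bellIndex_shiftParts {M : Type*} [AddCommMonoid M] {n k : ℕ} (hk : 1 ≤ k)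
    (hkn : k ≤ n) (f : (Fin (n + k + 1) → Fin (n + k + 1)) → M) :
    ∑ ℓ ∈ bellIndex n k, f (shiftParts (n + k) ℓ) =
      ∑ ℓ' ∈ bellIndex (n + k) k with (ℓ' 1 : ℕ) = 0, f ℓ' := by
  have h : n < n + k := by omega
  have hback : ∀ ℓ' ∈ {ℓ' ∈ bellIndex (n + k) k | (ℓ' 1 : ℕ) = 0},
      shiftParts (n + k) (unshiftParts h ℓ') = ℓ' := by
    intro ℓ' hℓ'
    have hmem := (mem_filter.1 hℓ').1
    refine shiftParts_unshiftParts h ℓ' (mem_filter.1 hmem).2.1 (fun j hj => ?_)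
      fun j => (le_of_mem_bellIndex hmem j).trans hkn
    have hle := sub_one_mul_le_of_mem_bellIndex hmem j
    by_contra hne
    have : n + 1 ≤ ((j : ℕ) - 1) * ℓ' j := le_mul_of_le_of_one_le (by omega) (by omega)
    omega
  refine sum_nbij' (shiftParts (n + k)) (unshiftParts h)
    (fun ℓ hℓ => mem_filter.2 ((mem_bellIndex_iff_shiftParts hk ℓ).1 hℓ))
    (fun ℓ' hℓ' => (mem_bellIndex_iff_shiftParts hk _).2 ?_)
    (fun ℓ _ => unshiftParts_shiftParts h ℓ) hback fun _ _ => rfl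
  rw [hback ℓ' hℓ']
  exact mem_filter.1 hℓ'

theorem bellMonomial_shiftParts {n m : ℕ} (h : n < m) (x : ℕ → ℝ) (ℓ : Fin (n + 1) → Fin (n + 1)) :
    bellMonomial x (shiftParts m ℓ) =
      (m.factorial : ℝ) / n.factorial * bellMonomial (fun i => x (i + 1) / ((i : ℝ) + 1)) ℓ := by
  have hfac : ∀ i : ℕ, x (i + 1) / ((i + 1).factorial : ℝ) =
      x (i + 1) / ((i : ℝ) + 1) / (i.factorial : ℝ) := by
    intro i
    rw [Nat.factorial_succ, Nat.cast_mul, div_div]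
    push_cast
    ring
  unfold bellMonomial
  rw [prod_shiftParts h ℓ (fun _ v => (v.factorial : ℝ)) fun _ => by simp,
    prod_shiftParts h ℓ (fun j v => (x j / (j.factorial : ℝ)) ^ v) fun _ => pow_zero _]
  simp only [hfac]
  field_simp

theorem bellMonomial_eq_zero {n : ℕ} {x : ℕ → ℝ} {ℓ : Fin (n + 1) → Fin (n + 1)} {j : Fin (n + 1)}
    (hx : x j = 0) (hℓ : (ℓ j : ℕ) ≠ 0) : bellMonomial x ℓ = 0 :=
  mul_eq_zero_of_right _ (prod_eq_zero (mem_univ j) (by rw [hx, zero_div, zero_pow hℓ]))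

theorem stmt_4 (n k : ℕ) (hk : 1 ≤ k) (hkn : k ≤ n) (x : ℕ → ℝ) :
    bellB n k (fun i => x (i + 1) / ((i : ℝ) + 1)) =
      ((n.factorial : ℝ) / ((n + k).factorial : ℝ)) *
        bellB (n + k) k (fun i => if i = 1 then 0 else x i) := by
  set x' : ℕ → ℝ := fun i => if i = 1 then 0 else x i
  calc bellB n k (fun i => x (i + 1) / ((i : ℝ) + 1))
      = bellB n k (fun i => x' (i + 1) / ((i : ℝ) + 1)) :=
        bellB_congr fun i hi => by simp [x', show i ≠ 0 by omega]
    _ = ∑ ℓ ∈ bellIndex n k,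
          (n.factorial : ℝ) / (n + k).factorial * bellMonomial x' (shiftParts (n + k) ℓ) := by
        rw [bellB_eq_sum_bellIndex]
        refine sum_congr rfl fun ℓ _ => ?_
        rw [bellMonomial_shiftParts (by omega)]
        field_simp
    _ = (n.factorial : ℝ) / (n + k).factorial *
          ∑ ℓ' ∈ bellIndex (n + k) k with (ℓ' 1 : ℕ) = 0, bellMonomial x' ℓ' := by
        rw [← mul_sum, sum_bellIndex_shiftParts hk hkn]
    _ = _ := by
        rw [bellB_eq_sum_bellIndex, sum_filter_of_ne]
        intro ℓ' _ hne
        by_contra h1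
        exact hne (bellMonomial_eq_zero (j := 1) (by simp [x']; omega) h1)
end

section
/- For all integers n ≥ k ≥ 1, the number of partitions of an n-element set into k blocks each of size at least 2 equals ∑_{i=0}^{k} (-1)^i · C(n,i) · S(n−i, k−i), where S denotes the Stirling numbers of the second kind. -/
open Finset

/-! Inclusion–exclusion over the elements that form singleton blocks. If every element of an
`i`-set `t` is a singleton block, deleting these blocks leaves a partition of the other `n - i`
elements into `k - i` blocks, and this is a bijection; so the partitions with this property are
counted by `S(n - i, k - i)` (and there are none when `i > k`).

The number of partitions of an `m`-set into `j` blocks is identified with the explicit formula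
`stirlingS m j` through surjections onto `Fin j`: every such partition has exactly `j!` labellings
of its blocks, each a surjection, and surjections are counted by inclusion–exclusion as well. -/

open Function

namespace Finset

theorem card_filter_forall_not_eq_sum {ι α R : Type*} [Fintype ι] [Fintype α] [CommRing R]
    (U : Finset α) (p : ι → α → Prop) [∀ i, DecidablePred (p i)] (g : ℕ → R)
    (hg : ∀ t : Finset ι, (#{a ∈ U | ∀ i ∈ t, p i a} : R) = g #t) :
    (#{a ∈ U | ∀ i, ¬ p i a} : R) =
      ∑ i ∈ range (Fintype.card ι + 1), (-1) ^ i * (Fintype.card ι).choose i * g i := by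
  let _ : DecidableEq α := Classical.decEq α
  have key := inclusion_exclusion_sum_inf_compl (G := R) univ (fun i => univ.filter (p i))
    (fun a => if a ∈ U then 1 else 0)
  have hinf (t : Finset ι) :
      {a ∈ t.inf fun i => univ.filter (p i) | a ∈ U} = {a ∈ U | ∀ i ∈ t, p i a} := by
    ext a
    simp [mem_inf, and_comm]
  have hinf_compl :
      {a ∈ univ.inf fun i => (univ.filter (p i))ᶜ | a ∈ U} = {a ∈ U | ∀ i, ¬ p i a} := by
    ext a
    simp [mem_inf, and_comm]
  simp only [sum_boole, hinf, hinf_compl, zsmul_eq_mul, Int.cast_pow, Int.cast_neg,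
    Int.cast_one] at key
  rw [key, sum_powerset]
  refine sum_congr rfl fun i _ => ?_
  have hterm (t) (ht : t ∈ powersetCard i (univ : Finset ι)) :
      (-1 : R) ^ #t * #{a ∈ U | ∀ i ∈ t, p i a} = (-1) ^ i * g i := by
    rw [hg, (mem_powersetCard.1 ht).2]
  rw [sum_congr rfl hterm, sum_const, card_powersetCard, card_univ, nsmul_eq_mul]
  ring

end Finset

theorem Fintype.card_filter_surjective_eq_sum {α β R : Type*} [Fintype α] [DecidableEq α]
    [Fintype β] [DecidableEq β] [CommRing R] :
    (#{f : α → β | Surjective f} : R) =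
      ∑ i ∈ range (Fintype.card β + 1),
        (-1) ^ i * (Fintype.card β).choose i *
          ((Fintype.card β - i : ℕ) : R) ^ Fintype.card α := by
  have hsurj : univ.filter (fun f : α → β => Surjective f) =
      univ.filter fun f : α → β => ∀ c, ¬ ∀ x, f x ≠ c :=
    filter_congr fun f _ => by simp only [Surjective, not_forall, not_not]
  rw [hsurj]
  refine card_filter_forall_not_eq_sum univ (fun c (f : α → β) => ∀ x, f x ≠ c) _
    fun t => ?_
  calc _ = (#(Fintype.piFinset fun _ : α => tᶜ) : R) := by
        congr 2
        ext f
        simp only [mem_filter, mem_univ, true_and, Fintype.mem_piFinset, mem_compl]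
        exact ⟨fun h x hx => h _ hx x rfl, fun h c hc x hfx => h x (hfx ▸ hc)⟩
    _ = _ := by simp [card_compl]

namespace Finpartition

variable {α β : Type*} {s : Finset α}

section Fibers

variable [DecidableEq β]

def fiber (f : s → β) (b : β) : Finset α :=
  ({x | f x = b} : Finset s).map (Embedding.subtype _)

lemma mem_fiber {f : s → β} {b : β} {a : α} :
    a ∈ fiber f b ↔ ∃ h : a ∈ s, f ⟨a, h⟩ = b := by
  simp [fiber]

lemma coe_mem_fiber_apply (f : s → β) (x : s) : (x : α) ∈ fiber f (f x) :=
  mem_fiber.2 ⟨x.2, rfl⟩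

lemma fiber_injective {f : s → β} (hf : Surjective f) : Injective (fiber f) := by
  intro b c hbc
  obtain ⟨x, rfl⟩ := hf b
  obtain ⟨_, hx⟩ := mem_fiber.1 (hbc ▸ coe_mem_fiber_apply f x)
  exact hx

variable [DecidableEq α] [Fintype β]

def ofFibers (f : s → β) : Finpartition s :=
  ofErase (univ.image (fiber f))
    (by
      rw [supIndep_iff_pairwiseDisjoint, coe_image, coe_univ, Set.image_univ]
      rintro _ ⟨b, rfl⟩ _ ⟨c, rfl⟩ hbc
      refine disjoint_left.2 fun a hb hc => hbc ?_
      obtain ⟨h, rfl⟩ := mem_fiber.1 hb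
      obtain ⟨_, rfl⟩ := mem_fiber.1 hc
      rfl)
    (by
      ext a
      simp only [mem_sup, mem_image, mem_univ, true_and, id, exists_exists_eq_and, mem_fiber]
      exact ⟨fun ⟨_, h, _⟩ => h, fun h => ⟨_, h, rfl⟩⟩)

lemma ofFibers_parts {f : s → β} (hf : Surjective f) :
    (ofFibers f).parts = univ.image (fiber f) := by
  refine erase_eq_of_notMem fun h => ?_
  obtain ⟨b, -, hb⟩ := mem_image.1 h
  obtain ⟨x, rfl⟩ := hf b
  exact notMem_empty _ (hb ▸ coe_mem_fiber_apply f x)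

lemma card_ofFibers_parts {f : s → β} (hf : Surjective f) :
    #(ofFibers f).parts = Fintype.card β := by
  rw [ofFibers_parts hf, card_image_of_injective _ (fiber_injective hf), card_univ]

lemma fiber_mem_ofFibers_parts {f : s → β} (hf : Surjective f) (b : β) :
    fiber f b ∈ (ofFibers f).parts := by
  rw [ofFibers_parts hf]
  exact mem_image_of_mem _ (mem_univ b)

end Fibers

section Labellings

variable [DecidableEq α]

def labelParts (P : Finpartition s) (e : P.parts → β) (x : s) : β :=
  e ⟨P.part x, P.part_mem.2 x.2⟩

lemma labelParts_of_mem {P : Finpartition s} (e : P.parts → β) {p : P.parts} {x : s}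
    (hx : (x : α) ∈ (p : Finset α)) : labelParts P e x = e p := by
  rw [labelParts]
  congr
  exact P.part_eq_of_mem p.2 hx

lemma surjective_labelParts (P : Finpartition s) (e : P.parts ≃ β) :
    Surjective (labelParts P e) := by
  intro b
  obtain ⟨a, ha⟩ := P.nonempty_of_mem_parts (e.symm b).2
  exact ⟨⟨a, P.le (e.symm b).2 ha⟩, by rw [labelParts_of_mem e ha, e.apply_symm_apply]⟩

variable [DecidableEq β]

lemma fiber_labelParts (P : Finpartition s) (e : P.parts ≃ β) (b : β) :
    fiber (labelParts P e) b = e.symm b := by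
  ext a
  rw [mem_fiber]
  constructor
  · rintro ⟨ha, rfl⟩
    simpa [labelParts] using P.mem_part ha
  · intro ha
    exact ⟨P.le (e.symm b).2 ha, by rw [labelParts_of_mem e ha, e.apply_symm_apply]⟩

variable [Fintype β]

lemma ofFibers_labelParts (P : Finpartition s) (e : P.parts ≃ β) :
    ofFibers (labelParts P e) = P := by
  ext p
  rw [ofFibers_parts (surjective_labelParts P e)]
  simp only [mem_image, mem_univ, true_and, fiber_labelParts]
  exact ⟨fun ⟨b, hb⟩ => hb ▸ (e.symm b).2, fun hp => ⟨e ⟨p, hp⟩, by simp⟩⟩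

lemma card_filter_ofFibers_eq (P : Finpartition s) (hP : #P.parts = Fintype.card β) :
    #{f : s → β | Surjective f ∧ ofFibers f = P} = (Fintype.card β).factorial := by
  have hcard : Fintype.card P.parts = Fintype.card β := by rw [Fintype.card_coe, hP]
  rw [← hcard, ← Fintype.card_equiv (Fintype.equivOfCardEq hcard), ← card_univ]
  symm
  refine card_bij (fun e _ => labelParts P e)
    (fun e _ => mem_filter.2 ⟨mem_univ _, surjective_labelParts P e, ofFibers_labelParts P e⟩)
    (fun e _ e' _ h => Equiv.symm_bijective.injective <| Equiv.ext fun b =>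
      Subtype.ext <| by rw [← fiber_labelParts, h, fiber_labelParts]) ?_
  intro f hf
  obtain ⟨-, hsurj, rfl⟩ := mem_filter.1 hf
  have hbij : Bijective fun b =>
      (⟨fiber f b, fiber_mem_ofFibers_parts hsurj b⟩ : (ofFibers f).parts) := by
    refine ⟨fun b c h => fiber_injective hsurj (congrArg Subtype.val h), fun p => ?_⟩
    have hp : (p : Finset α) ∈ univ.image (fiber f) := by
      rw [← ofFibers_parts hsurj]
      exact p.2
    obtain ⟨b, -, hb⟩ := mem_image.1 hp
    exact ⟨b, Subtype.ext hb⟩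
  refine ⟨(Equiv.ofBijective _ hbij).symm, mem_univ _, funext fun x => ?_⟩
  rw [labelParts, Equiv.symm_apply_eq, Equiv.ofBijective_apply, Subtype.mk.injEq]
  exact (ofFibers f).part_eq_of_mem (fiber_mem_ofFibers_parts hsurj _) (coe_mem_fiber_apply f x)

theorem card_filter_surjective_eq_factorial_mul (s : Finset α) :
    #{f : s → β | Surjective f} =
      (Fintype.card β).factorial * #{P : Finpartition s | #P.parts = Fintype.card β} := by
  rw [card_eq_sum_card_fiberwise (f := ofFibers)
    (t := {P : Finpartition s | #P.parts = Fintype.card β})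
    fun f hf => mem_filter.2 ⟨mem_univ _, card_ofFibers_parts (mem_filter.1 hf).2⟩]
  rw [sum_congr rfl fun P hP => ?_, sum_const, smul_eq_mul, mul_comm]
  rw [filter_filter]
  exact card_filter_ofFibers_eq P (mem_filter.1 hP).2

end Labellings

theorem card_filter_card_parts_eq_stirlingS [DecidableEq α] (s : Finset α) (j : ℕ) :
    (#{P : Finpartition s | #P.parts = j} : ℝ) = stirlingS #s j := by
  have hcount := card_filter_surjective_eq_factorial_mul (β := Fin j) s
  have hsum := Fintype.card_filter_surjective_eq_sum (α := s) (β := Fin j) (R := ℝ)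
  simp only [Fintype.card_fin, Fintype.card_coe] at hcount hsum
  rw [hcount, Nat.cast_mul] at hsum
  rw [stirlingS, ← sum_range_reflect, Nat.add_sub_cancel, ← hsum.trans (sum_congr rfl _)]
  · field_simp
  · intro i hi
    have hij : i ≤ j := Nat.lt_succ_iff.1 (mem_range.1 hi)
    rw [Nat.sub_sub_self hij, Nat.choose_symm hij]

section Singletons

variable [DecidableEq α] {t : Finset α}

lemma bot_parts_subset_iff {P : Finpartition s} :
    (⊥ : Finpartition t).parts ⊆ P.parts ↔ ∀ x ∈ t, {x} ∈ P.parts := by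
  simp [subset_iff]

lemma filter_not_disjoint_parts {P : Finpartition s}
    (hP : (⊥ : Finpartition t).parts ⊆ P.parts) :
    P.parts.filter (fun b => ¬ Disjoint b t) = (⊥ : Finpartition t).parts := by
  replace hP := bot_parts_subset_iff.1 hP
  ext b
  simp only [mem_filter, parts_bot, mem_map, Embedding.coeFn_mk, not_disjoint_iff]
  constructor
  · rintro ⟨hb, x, hxb, hxt⟩
    exact ⟨x, hxt, P.eq_of_mem_parts (hP x hxt) hb (mem_singleton_self x) hxb⟩
  · rintro ⟨x, hxt, rfl⟩
    exact ⟨hP x hxt, x, mem_singleton_self x, hxt⟩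

def eraseSingletons (P : Finpartition s) (hP : (⊥ : Finpartition t).parts ⊆ P.parts) :
    Finpartition (s \ t) :=
  P.ofSubset (filter_subset (fun b => Disjoint b t) P.parts) <| by
    ext z
    simp only [mem_sup, mem_filter, id, mem_sdiff]
    constructor
    · rintro ⟨b, ⟨hb, hbt⟩, hzb⟩
      exact ⟨P.le hb hzb, disjoint_left.1 hbt hzb⟩
    · rintro ⟨hzs, hzt⟩
      refine ⟨P.part z, ⟨P.part_mem.2 hzs, disjoint_right.2 fun x hxt hxz => hzt ?_⟩,
        P.mem_part hzs⟩
      have hpart := P.eq_of_mem_parts (P.part_mem.2 hzs) (bot_parts_subset_iff.1 hP x hxt) hxz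
        (mem_singleton_self x)
      exact mem_singleton.1 (hpart ▸ P.mem_part hzs) ▸ hxt

lemma card_eraseSingletons_parts (P : Finpartition s)
    (hP : (⊥ : Finpartition t).parts ⊆ P.parts) :
    #(P.eraseSingletons hP).parts = #P.parts - #t := by
  have hsplit := card_filter_add_card_filter_not (s := P.parts) (fun b => Disjoint b t)
  rw [filter_not_disjoint_parts hP, card_bot] at hsplit
  change #(P.parts.filter _) = _
  omega

def addSingletons (hts : t ⊆ s) (Q : Finpartition (s \ t)) : Finpartition s where
  parts := Q.parts ∪ (⊥ : Finpartition t).parts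
  supIndep := Q.supIndep.union (⊥ : Finpartition t).supIndep <| by
    rw [Q.sup_parts, (⊥ : Finpartition t).sup_parts]
    exact sdiff_disjoint
  sup_parts := by
    rw [sup_union, Q.sup_parts, (⊥ : Finpartition t).sup_parts]
    exact sdiff_union_of_subset hts
  bot_notMem h := (mem_union.1 h).elim Q.bot_notMem (⊥ : Finpartition t).bot_notMem

lemma card_addSingletons_parts (hts : t ⊆ s) (Q : Finpartition (s \ t)) :
    #(addSingletons hts Q).parts = #Q.parts + #t := by
  refine (card_union_of_disjoint (disjoint_right.2 fun b hb hbQ => ?_)).trans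
    (by rw [card_bot])
  obtain ⟨x, hxt, rfl⟩ := mem_bot_iff.1 hb
  exact (mem_sdiff.1 (Q.le hbQ (mem_singleton_self x))).2 hxt

theorem card_filter_bot_subset_parts (hts : t ⊆ s) (k : ℕ) (htk : #t ≤ k) :
    #{P : Finpartition s | #P.parts = k ∧ (⊥ : Finpartition t).parts ⊆ P.parts} =
      #{Q : Finpartition (s \ t) | #Q.parts = k - #t} := by
  refine card_bij' (fun P hP => P.eraseSingletons (mem_filter.1 hP).2.2)
    (fun Q _ => addSingletons hts Q) (fun P hP => ?_) (fun Q hQ => ?_) (fun P hP => ?_)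
    (fun Q _ => ?_)
  · obtain ⟨-, hPk, -⟩ := mem_filter.1 hP
    exact mem_filter.2 ⟨mem_univ _, by rw [card_eraseSingletons_parts, hPk]⟩
  · obtain ⟨-, hQk⟩ := mem_filter.1 hQ
    exact mem_filter.2 ⟨mem_univ _, by rw [card_addSingletons_parts, hQk]; omega,
      subset_union_right⟩
  · obtain ⟨-, -, hP⟩ := mem_filter.1 hP
    ext b
    change b ∈ P.parts.filter _ ∪ _ ↔ _
    rw [← filter_not_disjoint_parts hP, filter_union_filter_not_eq]
  · ext b
    change b ∈ (Q.parts ∪ _).filter _ ↔ _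
    rw [filter_union,
      filter_true_of_mem fun b hb => disjoint_of_subset_left (Q.le hb) sdiff_disjoint,
      filter_false_of_mem, union_empty]
    intro b hb
    obtain ⟨x, hxt, rfl⟩ := mem_bot_iff.1 hb
    exact not_disjoint_iff.2 ⟨x, mem_singleton_self x, hxt⟩

theorem card_filter_bot_subset_parts_eq_zero (k : ℕ) (hkt : k < #t) :
    #{P : Finpartition s | #P.parts = k ∧ (⊥ : Finpartition t).parts ⊆ P.parts} = 0 :=
  card_eq_zero.2 <| filter_eq_empty_iff.2 fun _ _ ⟨hPk, hP⟩ =>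
    hkt.not_ge (hPk ▸ card_bot t ▸ card_le_card hP)

lemma forall_two_le_card_iff_singleton_notMem (P : Finpartition s) :
    (∀ b ∈ P.parts, 2 ≤ #b) ↔ ∀ x, {x} ∉ P.parts := by
  refine ⟨fun h x hx => by simpa using h _ hx, fun h b hb => ?_⟩
  have hpos : 0 < #b := card_pos.2 (P.nonempty_of_mem_parts hb)
  have hne : #b ≠ 1 := fun hb1 => by
    obtain ⟨x, rfl⟩ := card_eq_one.1 hb1
    exact h x hb
  omega

end Singletons

end Finpartition

theorem stmt_10_general (n k : ℕ) :
    (Nat.card {P : Finpartition (Finset.univ : Finset (Fin n)) //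
        P.parts.card = k ∧ ∀ b ∈ P.parts, 2 ≤ b.card} : ℝ) =
      ∑ i ∈ Finset.range (k + 1),
        (-1 : ℝ) ^ i * (n.choose i) * stirlingS (n - i) (k - i) := by
  -- `filter_congr_decidable` replaces the decidability instances produced by the general
  -- lemma with the ones inferred here, which the counting lemmas are stated with.
  have hIE := card_filter_forall_not_eq_sum {P : Finpartition univ | #P.parts = k}
    (fun (x : Fin n) P => {x} ∈ P.parts)
    (fun i => if i ≤ k then stirlingS (n - i) (k - i) else 0)
    fun t => by
      rw [filter_filter, filter_congr_decidable,
        filter_congr fun P _ => and_congr_right' Finpartition.bot_parts_subset_iff.symm]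
      split_ifs with htk
      · rw [Finpartition.card_filter_bot_subset_parts (subset_univ t) k htk,
          Finpartition.card_filter_card_parts_eq_stirlingS, card_univ_sdiff, Fintype.card_fin]
      · rw [Finpartition.card_filter_bot_subset_parts_eq_zero k (by omega), Nat.cast_zero]
  rw [filter_filter, filter_congr_decidable, Fintype.card_fin] at hIE
  rw [Nat.card_eq_fintype_card, Fintype.card_subtype, filter_congr fun P _ =>
    and_congr_right' P.forall_two_le_card_iff_singleton_notMem, hIE]
  set T : ℕ → ℝ := fun i => (-1) ^ i * (n.choose i) *
    if i ≤ k then stirlingS (n - i) (k - i) else 0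
  calc ∑ i ∈ range (n + 1), T i = ∑ i ∈ range (n + 1 + k), T i :=
        (eventually_constant_sum (fun i hi => by simp [T, Nat.choose_eq_zero_of_lt hi])
          (by omega)).symm
    _ = ∑ i ∈ range (k + 1), T i :=
        eventually_constant_sum (fun i hi => by simp [T, show ¬ i ≤ k by omega]) (by omega)
    _ = _ := sum_congr rfl fun i hi => by simp [T, Nat.lt_succ_iff.1 (mem_range.1 hi)]

theorem stmt_10 (n k : ℕ) (hk : 1 ≤ k) (hkn : k ≤ n) :
    (Nat.card {P : Finpartition (Finset.univ : Finset (Fin n)) //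
        P.parts.card = k ∧ ∀ b ∈ P.parts, 2 ≤ b.card} : ℝ) =
      ∑ i ∈ Finset.range (k + 1),
        (-1 : ℝ) ^ i * (n.choose i) * stirlingS (n - i) (k - i) :=
  stmt_10_general n k
end
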